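/- arXiv:1407.4403 — 3 statements merged into one kernel-verified Lean document; each statement's English description precedes it below -/
import Mathlib

section
/- Let 𝔩 be a 3-dimensional Lie algebra with basis E₀, E₁, E₂, brackets [Eᵢ,Eⱼ] = Cᵢⱼᵏ Eₖ, and let g be the bilinear form with g(E₀,E₀) = g(E₁,E₁) = -g(E₂,E₂) = 1 and g(Eᵢ,Eⱼ) = 0 for i ≠ j. Then g is ad-invariant (i.e., g([x,y],z) = g(x,[y,z]) for all x,y,z) if and only if C₁₂⁰ = -C₀₁² = -C₀₂¹ and all other structure constants vanish. -/
/-!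
Both sides of the invariance identity are trilinear, so it holds iff it holds on basis triples,
i.e. iff the lowered structure constants `c i j k = g(E k, E k) * C i j k = g([E i, E j], E k)`
are invariant under cyclic permutations of `(i, j, k)`. Being already antisymmetric in `(i, j)`,
`c` is then totally antisymmetric, hence a multiple of the determinant in dimension three: its
only free entry is `c 0 1 2 = c 1 2 0 = c 2 0 1`, which is `-C 0 1 2 = C 1 2 0 = -C 0 2 1`.
-/

noncomputable section

def E3 (i : Fin 3) : Fin 3 → ℝ := Pi.single i 1

/-- The B-metric g with g(e₀,e₀)=g(e₁,e₁)=1, g(e₂,e₂)=-1, off-diagonal zero. -/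
def gB (x y : Fin 3 → ℝ) : ℝ := x 0 * y 0 + x 1 * y 1 - x 2 * y 2

/-- The endomorphism φ: φe₀ = 0, φe₁ = e₂, φe₂ = -e₁. -/
def phi3 (x : Fin 3 → ℝ) : Fin 3 → ℝ := ![0, -x 2, x 1]

/-- The 1-form η = e₀*. -/
def eta3 (x : Fin 3 → ℝ) : ℝ := x 0
/-- Bracket with structure constants C: [x,y]ᵏ = Σᵢⱼ Cᵢⱼᵏ xⁱ yʲ. -/
def brC (C : Fin 3 → Fin 3 → Fin 3 → ℝ) (x y : Fin 3 → ℝ) : Fin 3 → ℝ :=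
  fun k => ∑ i : Fin 3, ∑ j : Fin 3, C i j k * x i * y j

theorem forall_trilinear_sum_eq_iff {ι R : Type*} [Fintype ι] [DecidableEq ι] [CommSemiring R]
    (T T' : ι → ι → ι → R) :
    (∀ x y z : ι → R, ∑ i, ∑ j, ∑ k, T i j k * x i * y j * z k =
        ∑ i, ∑ j, ∑ k, T' i j k * x i * y j * z k) ↔
      ∀ i j k, T i j k = T' i j k := by
  refine ⟨fun h i j k => ?_, fun h x y z => by simp only [h]⟩
  simpa [Pi.single_apply] using h (Pi.single i 1) (Pi.single j 1) (Pi.single k 1)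

def gBsign : Fin 3 → ℝ := ![1, 1, -1]

@[simp] theorem gBsign_zero : gBsign 0 = 1 := rfl

@[simp] theorem gBsign_one : gBsign 1 = 1 := rfl

@[simp] theorem gBsign_two : gBsign 2 = -1 := rfl

theorem gB_eq_sum (x y : Fin 3 → ℝ) : gB x y = ∑ k, gBsign k * x k * y k := by
  simp only [gB, Fin.sum_univ_three, gBsign_zero, gBsign_one, gBsign_two]
  ring

theorem gB_brC_left (C : Fin 3 → Fin 3 → Fin 3 → ℝ) (x y z : Fin 3 → ℝ) :
    gB (brC C x y) z = ∑ i, ∑ j, ∑ k, gBsign k * C i j k * x i * y j * z k := by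
  simp only [gB_eq_sum, brC, Finset.mul_sum, Finset.sum_mul]
  rw [Finset.sum_comm]
  refine Finset.sum_congr rfl fun i _ => ?_
  rw [Finset.sum_comm]
  refine Finset.sum_congr rfl fun j _ => Finset.sum_congr rfl fun k _ => ?_
  ring

theorem gB_brC_right (C : Fin 3 → Fin 3 → Fin 3 → ℝ) (x y z : Fin 3 → ℝ) :
    gB x (brC C y z) = ∑ i, ∑ j, ∑ k, gBsign i * C j k i * x i * y j * z k := by
  simp only [gB_eq_sum, brC, Finset.mul_sum]
  refine Finset.sum_congr rfl fun i _ => Finset.sum_congr rfl fun j _ =>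
    Finset.sum_congr rfl fun k _ => ?_
  ring

theorem gBsign_mul_cyclic_iff (C : Fin 3 → Fin 3 → Fin 3 → ℝ)
    (hanti : ∀ i j k : Fin 3, C j i k = -C i j k) :
    (∀ i j k, gBsign k * C i j k = gBsign i * C j k i) ↔
      (C 1 2 0 = -C 0 1 2 ∧ C 1 2 0 = -C 0 2 1 ∧
       C 0 1 0 = 0 ∧ C 0 1 1 = 0 ∧ C 0 2 0 = 0 ∧ C 0 2 2 = 0 ∧
       C 1 2 1 = 0 ∧ C 1 2 2 = 0) := by
  have hdiag : ∀ i k, C i i k = 0 := fun i k => by linarith [hanti i i k]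
  have h01 := hanti 0 1
  have h02 := hanti 0 2
  have h12 := hanti 1 2
  constructor
  · intro h
    have h010 := h 0 1 0
    have h011 := h 0 1 1
    have h012 := h 0 1 2
    have h020 := h 0 2 0
    have h022 := h 0 2 2
    have h120 := h 1 2 0
    have h121 := h 1 2 1
    have h122 := h 1 2 2
    simp only [gBsign_zero, gBsign_one, gBsign_two, hdiag, one_mul, neg_mul, mul_zero]
      at h010 h011 h012 h020 h022 h120 h121 h122
    refine ⟨?_, ?_, ?_, ?_, ?_, ?_, ?_, ?_⟩ <;>
      linarith [h01 0, h02 0, h02 1, h12 1, h12 2]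
  · rintro ⟨h1, h2, h3, h4, h5, h6, h7, h8⟩ i j k
    fin_cases i <;> fin_cases j <;> fin_cases k <;>
      simp only [Fin.zero_eta, Fin.mk_one, Fin.reduceFinMk, gBsign_zero, gBsign_one, gBsign_two,
        hdiag, one_mul, neg_mul, mul_zero, neg_inj] <;>
      linarith [h01 0, h01 1, h01 2, h02 0, h02 1, h02 2, h12 0, h12 1, h12 2]

/-- g is ad-invariant (Killing) iff C₁₂⁰ = -C₀₁² = -C₀₂¹ and
all other structure constants vanish. -/
theorem g_Killing_iff (C : Fin 3 → Fin 3 → Fin 3 → ℝ)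
    (hanti : ∀ i j k : Fin 3, C j i k = -C i j k) :
    (∀ x y z : Fin 3 → ℝ, gB (brC C x y) z = gB x (brC C y z)) ↔
      (C 1 2 0 = -C 0 1 2 ∧ C 1 2 0 = -C 0 2 1 ∧
       C 0 1 0 = 0 ∧ C 0 1 1 = 0 ∧ C 0 2 0 = 0 ∧ C 0 2 2 = 0 ∧
       C 1 2 1 = 0 ∧ C 1 2 2 = 0) := by
  simp only [gB_brC_left, gB_brC_right]
  rw [forall_trilinear_sum_eq_iff]
  exact gBsign_mul_cyclic_iff C hanti
end
end

section
/- Let 𝔩 be the Lie algebra with brackets [E₀,E₁] = αE₂, [E₀,E₂] = αE₁, [E₁,E₂] = 0 (the F₁₀-case) and g the metric with g(E₀,E₀) = g(E₁,E₁) = -g(E₂,E₂) = 1, g(Eᵢ,Eⱼ) = 0 for i ≠ j. Define the Levi-Civita connection ∇ by the Koszul formula 2g(∇_{Eᵢ}Eⱼ, Eₖ) = g([Eᵢ,Eⱼ],Eₖ) + g([Eₖ,Eᵢ],Eⱼ) + g([Eₖ,Eⱼ],Eᵢ). Then the curvature tensor R(x,y)z = ∇ₓ∇ᵧz - ∇ᵧ∇ₓz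 - ∇_{[x,y]}z vanishes identically on basis vectors. -/
/-!
Koszul's formula determines the connection from its values on the basis, and it is solved by
`∇ₓ = α x₀ ω`, where `ω` swaps `E₁` and `E₂` and kills `E₀`. Such a connection is flat: both
second-order terms `∇ₓ∇ᵧ` and `∇ᵧ∇ₓ` equal `α² x₀ y₀ ω²`, and `∇_[x,y]` vanishes because
brackets have no `E₀`-component.
-/

noncomputable section

/-- Curvature tensor R(x,y)z = ∇ₓ∇ᵧz - ∇ᵧ∇ₓz - ∇_{[x,y]}z of a bilinear connection. -/
def curv (nabla : (Fin 3 → ℝ) →ₗ[ℝ] (Fin 3 → ℝ) →ₗ[ℝ] (Fin 3 → ℝ))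
    (br : (Fin 3 → ℝ) → (Fin 3 → ℝ) → (Fin 3 → ℝ)) (x y z : Fin 3 → ℝ) : Fin 3 → ℝ :=
  nabla x (nabla y z) - nabla y (nabla x z) - nabla (br x y) z

/-- Curvature components R(Eᵢ,Eⱼ,Eₖ,Eₗ) = g(R(Eᵢ,Eⱼ)Eₖ, Eₗ). -/
def Rc (nabla : (Fin 3 → ℝ) →ₗ[ℝ] (Fin 3 → ℝ) →ₗ[ℝ] (Fin 3 → ℝ))
    (br : (Fin 3 → ℝ) → (Fin 3 → ℝ) → (Fin 3 → ℝ)) (i j k l : Fin 3) : ℝ :=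
  gB (curv nabla br (E3 i) (E3 j) (E3 k)) (E3 l)

/-- Ricci tensor ρⱼₖ = R₀ⱼₖ₀ + R₁ⱼₖ₁ - R₂ⱼₖ₂. -/
def ricci (nabla : (Fin 3 → ℝ) →ₗ[ℝ] (Fin 3 → ℝ) →ₗ[ℝ] (Fin 3 → ℝ))
    (br : (Fin 3 → ℝ) → (Fin 3 → ℝ) → (Fin 3 → ℝ)) (j k : Fin 3) : ℝ :=
  Rc nabla br 0 j k 0 + Rc nabla br 1 j k 1 - Rc nabla br 2 j k 2

/-- Scalar curvature τ = ρ₀₀ + ρ₁₁ - ρ₂₂. -/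
def scal (nabla : (Fin 3 → ℝ) →ₗ[ℝ] (Fin 3 → ℝ) →ₗ[ℝ] (Fin 3 → ℝ))
    (br : (Fin 3 → ℝ) → (Fin 3 → ℝ) → (Fin 3 → ℝ)) : ℝ :=
  ricci nabla br 0 0 + ricci nabla br 1 1 - ricci nabla br 2 2

/-- The F₁₀-bracket: [E₀,E₁] = αE₂, [E₀,E₂] = αE₁, [E₁,E₂] = 0. -/
def brF10 (α : ℝ) (x y : Fin 3 → ℝ) : Fin 3 → ℝ :=
  ![0, α * (x 0 * y 2 - x 2 * y 0), α * (x 0 * y 1 - x 1 * y 0)]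

/-- Right-hand side of the Koszul formula for `2 g(∇_{Eᵢ}Eⱼ, Eₖ)` on left-invariant fields. -/
def koszul (br : (Fin 3 → ℝ) → (Fin 3 → ℝ) → (Fin 3 → ℝ)) (i j k : Fin 3) : ℝ :=
  gB (br (E3 i) (E3 j)) (E3 k) + gB (br (E3 k) (E3 i)) (E3 j) + gB (br (E3 k) (E3 j)) (E3 i)

theorem eq_of_forall_gB_E3_eq {v w : Fin 3 → ℝ} (h : ∀ k, gB v (E3 k) = gB w (E3 k)) :
    v = w := by
  funext k
  have hk := h k
  fin_cases k <;> simp [gB, E3] at hk ⊢ <;> linarith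

theorem bilin_eq_of_forall_gB_E3_eq {B B' : (Fin 3 → ℝ) →ₗ[ℝ] (Fin 3 → ℝ) →ₗ[ℝ] (Fin 3 → ℝ)}
    (h : ∀ i j k, gB (B (E3 i) (E3 j)) (E3 k) = gB (B' (E3 i) (E3 j)) (E3 k)) : B = B' :=
  LinearMap.ext_basis (Pi.basisFun ℝ (Fin 3)) (Pi.basisFun ℝ (Fin 3)) fun i j => by
    rw [Pi.basisFun_apply, Pi.basisFun_apply]; exact eq_of_forall_gB_E3_eq (h i j)

theorem bilin_eq_of_koszul {br : (Fin 3 → ℝ) → (Fin 3 → ℝ) → (Fin 3 → ℝ)}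
    {B B' : (Fin 3 → ℝ) →ₗ[ℝ] (Fin 3 → ℝ) →ₗ[ℝ] (Fin 3 → ℝ)}
    (hB : ∀ i j k, 2 * gB (B (E3 i) (E3 j)) (E3 k) = koszul br i j k)
    (hB' : ∀ i j k, 2 * gB (B' (E3 i) (E3 j)) (E3 k) = koszul br i j k) : B = B' :=
  bilin_eq_of_forall_gB_E3_eq fun i j k => by linarith [hB i j k, hB' i j k]

theorem curv_eq_zero_of_eq_smul {nabla : (Fin 3 → ℝ) →ₗ[ℝ] (Fin 3 → ℝ) →ₗ[ℝ] (Fin 3 → ℝ)}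
    {br : (Fin 3 → ℝ) → (Fin 3 → ℝ) → (Fin 3 → ℝ)} (f : (Fin 3 → ℝ) →ₗ[ℝ] ℝ)
    (T : Module.End ℝ (Fin 3 → ℝ)) (hnabla : ∀ x, nabla x = f x • T)
    (hbr : ∀ x y, f (br x y) = 0) (x y z : Fin 3 → ℝ) : curv nabla br x y z = 0 := by
  simp only [curv, hnabla, hbr, LinearMap.smul_apply, map_smul, smul_smul, mul_comm (f x),
    zero_smul, LinearMap.zero_apply, sub_self]

def swap12 : Module.End ℝ (Fin 3 → ℝ) := Matrix.toLin' !![0, 0, 0; 0, 0, 1; 0, 1, 0]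

def nablaF10 (α : ℝ) : (Fin 3 → ℝ) →ₗ[ℝ] (Fin 3 → ℝ) →ₗ[ℝ] (Fin 3 → ℝ) :=
  (α • LinearMap.proj 0).smulRight swap12

theorem nablaF10_koszul (α : ℝ) (i j k : Fin 3) :
    2 * gB (nablaF10 α (E3 i) (E3 j)) (E3 k) = koszul (brF10 α) i j k := by
  fin_cases i <;> fin_cases j <;> fin_cases k <;>
    simp [nablaF10, swap12, koszul, brF10, gB, E3] <;> ring

theorem curv_nablaF10 (α : ℝ) (x y z : Fin 3 → ℝ) : curv (nablaF10 α) (brF10 α) x y z = 0 :=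
  curv_eq_zero_of_eq_smul (α • LinearMap.proj 0) swap12 (fun _ => rfl)
    (fun x y => by simp [brF10]) x y z

/-- the F₁₀-manifolds are flat. -/
theorem F10_flat (α : ℝ)
    (nabla : (Fin 3 → ℝ) →ₗ[ℝ] (Fin 3 → ℝ) →ₗ[ℝ] (Fin 3 → ℝ))
    (hK : ∀ i j k : Fin 3, 2 * gB (nabla (E3 i) (E3 j)) (E3 k) =
      gB (brF10 α (E3 i) (E3 j)) (E3 k) + gB (brF10 α (E3 k) (E3 i)) (E3 j)
        + gB (brF10 α (E3 k) (E3 j)) (E3 i)) :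
    ∀ i j k l : Fin 3, Rc nabla (brF10 α) i j k l = 0 := by
  obtain rfl : nabla = nablaF10 α := bilin_eq_of_koszul hK (nablaF10_koszul α)
  intro i j k l
  simp only [Rc, curv_nablaF10, gB, Pi.zero_apply, zero_mul, sub_self, add_zero]
end
end

section
/- Let 𝔩 be the F₅-Lie algebra with brackets [E₀,E₁] = αE₁, [E₀,E₂] = αE₂, [E₁,E₂] = 0 and the standard B-metric g. Then the Ricci tensor satisfies ρ = (τ/3)g with τ = -6α², i.e., the induced manifold is Einstein with negative scalar curvature whenever α ≠ 0. -/
noncomputable section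

/-- The F₅-bracket: [E₀,E₁] = αE₁, [E₀,E₂] = αE₂, [E₁,E₂] = 0. -/
def brF5 (α : ℝ) (x y : Fin 3 → ℝ) : Fin 3 → ℝ :=
  ![0, α * (x 0 * y 1 - x 1 * y 0), α * (x 0 * y 2 - x 2 * y 0)]

/-!
Since `gB` is nondegenerate, the Koszul formula determines the connection; for the `F₅`-bracket it is
`∇ₓy = α (g(x,y) E₀ - η(y) x)`, which has constant curvature `-α²`.
In dimension three constant curvature `K` gives `ρ = 2K g` and `τ = 6K`.
-/

section ConstantCurvature

variable (nabla : (Fin 3 → ℝ) →ₗ[ℝ] (Fin 3 → ℝ) →ₗ[ℝ] (Fin 3 → ℝ))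
  (br : (Fin 3 → ℝ) → (Fin 3 → ℝ) → (Fin 3 → ℝ))

def HasConstCurvature (K : ℝ) : Prop :=
  ∀ x y z, curv nabla br x y z = K • (gB y z • x - gB x z • y)

variable {nabla br} {K : ℝ}

theorem HasConstCurvature.ricci_eq (h : HasConstCurvature nabla br K) (j k : Fin 3) :
    ricci nabla br j k = 2 * K * gB (E3 j) (E3 k) := by
  rw [HasConstCurvature] at h
  simp only [ricci, Rc, h]
  fin_cases j <;> fin_cases k <;> simp [gB, E3] <;> ring

theorem HasConstCurvature.scal_eq (h : HasConstCurvature nabla br K) :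
    scal nabla br = 6 * K := by
  simp [scal, h.ricci_eq, gB, E3]
  ring

end ConstantCurvature

def leviCivitaF5 (α : ℝ) : (Fin 3 → ℝ) →ₗ[ℝ] (Fin 3 → ℝ) →ₗ[ℝ] (Fin 3 → ℝ) :=
  LinearMap.mk₂ ℝ (fun x y => α • (gB x y • E3 0 - y 0 • x))
    (fun _ _ _ => by ext; simp [gB]; ring) (fun _ _ _ => by ext; simp [gB]; ring)
    (fun _ _ _ => by ext; simp [gB]; ring) (fun _ _ _ => by ext; simp [gB]; ring)

theorem leviCivitaF5_apply (α : ℝ) (x y : Fin 3 → ℝ) :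
    leviCivitaF5 α x y = α • (gB x y • E3 0 - y 0 • x) := rfl

theorem leviCivitaF5_koszul (α : ℝ) (x y z : Fin 3 → ℝ) :
    2 * gB (leviCivitaF5 α x y) z =
      gB (brF5 α x y) z + gB (brF5 α z x) y + gB (brF5 α z y) x := by
  simp [leviCivitaF5_apply, gB, brF5, E3]
  ring

theorem eq_leviCivitaF5_of_koszul {α : ℝ}
    {nabla : (Fin 3 → ℝ) →ₗ[ℝ] (Fin 3 → ℝ) →ₗ[ℝ] (Fin 3 → ℝ)}
    (hK : ∀ i j k : Fin 3, 2 * gB (nabla (E3 i) (E3 j)) (E3 k) =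
      gB (brF5 α (E3 i) (E3 j)) (E3 k) + gB (brF5 α (E3 k) (E3 i)) (E3 j)
        + gB (brF5 α (E3 k) (E3 j)) (E3 i)) :
    nabla = leviCivitaF5 α := by
  refine LinearMap.ext_basis (Pi.basisFun ℝ (Fin 3)) (Pi.basisFun ℝ (Fin 3)) fun i j => ?_
  refine eq_of_forall_gB_E3_eq fun k => ?_
  have h := leviCivitaF5_koszul α (E3 i) (E3 j) (E3 k)
  simp only [Pi.basisFun_apply]
  change gB (nabla (E3 i) (E3 j)) (E3 k) = gB (leviCivitaF5 α (E3 i) (E3 j)) (E3 k)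
  linarith [hK i j k]

theorem hasConstCurvature_leviCivitaF5 (α : ℝ) :
    HasConstCurvature (leviCivitaF5 α) (brF5 α) (-α ^ 2) := by
  intro x y z
  funext k
  fin_cases k <;>
    simp [curv, leviCivitaF5_apply, gB, brF5, E3, Matrix.vecHead, Matrix.vecTail] <;> ring

/-- the F₅-case is Einstein: ρ = (τ/3)g with τ = -6α² < 0 for α ≠ 0. -/
theorem F5_Einstein (α : ℝ)
    (nabla : (Fin 3 → ℝ) →ₗ[ℝ] (Fin 3 → ℝ) →ₗ[ℝ] (Fin 3 → ℝ))
    (hK : ∀ i j k : Fin 3, 2 * gB (nabla (E3 i) (E3 j)) (E3 k) =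
      gB (brF5 α (E3 i) (E3 j)) (E3 k) + gB (brF5 α (E3 k) (E3 i)) (E3 j)
        + gB (brF5 α (E3 k) (E3 j)) (E3 i)) :
    (∀ j k : Fin 3, ricci nabla (brF5 α) j k =
      (scal nabla (brF5 α) / 3) * gB (E3 j) (E3 k)) ∧
    scal nabla (brF5 α) = -6 * α ^ 2 ∧
    (α ≠ 0 → scal nabla (brF5 α) < 0) := by
  obtain rfl := eq_leviCivitaF5_of_koszul hK
  have hcurv := hasConstCurvature_leviCivitaF5 α
  have hscal : scal (leviCivitaF5 α) (brF5 α) = -6 * α ^ 2 := by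
    rw [hcurv.scal_eq]
    ring
  refine ⟨fun j k => ?_, hscal, fun hα => ?_⟩
  · rw [hcurv.ricci_eq, hscal]
    ring
  · rw [hscal]
    have : 0 < α ^ 2 := by positivity
    linarith
end
end
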